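/- Let λ_1 ≥ λ_2 ≥ … ≥ λ_n be real numbers with Σ_{i=1}^n λ_i² = 1, and let I := {(i,j) : 1 ≤ i, j ≤ n, λ_i − λ_j > 2/√3}. Then either every pair (i,j) ∈ I satisfies i = 1, or every pair (i,j) ∈ I satisfies j = n. -/
import Mathlib

lemma sum_sq_ge3 {n : ℕ} (f : Fin n → ℝ) (a b c : Fin n) (hab : a ≠ b)
    (hac : a ≠ c) (hbc : b ≠ c) (hsum : ∑ i : Fin n, f i ^ 2 = 1) :
    f a ^ 2 + f b ^ 2 + f c ^ 2 ≤ 1 := by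
  have h : ∑ i ∈ ({a, b, c} : Finset (Fin n)), f i ^ 2 ≤ ∑ i : Fin n, f i ^ 2 :=
    Finset.sum_le_sum_of_subset_of_nonneg (Finset.subset_univ _)
      (fun i _ _ => sq_nonneg _)
  rw [Finset.sum_insert (by simp [hab, hac]), Finset.sum_insert (by simp [hbc]),
    Finset.sum_singleton, hsum] at h
  linarith

lemma sum_sq_ge4 {n : ℕ} (f : Fin n → ℝ) (a b c d : Fin n) (hab : a ≠ b)
    (hac : a ≠ c) (had : a ≠ d) (hbc : b ≠ c) (hbd : b ≠ d) (hcd : c ≠ d)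
    (hsum : ∑ i : Fin n, f i ^ 2 = 1) :
    f a ^ 2 + f b ^ 2 + f c ^ 2 + f d ^ 2 ≤ 1 := by
  have h : ∑ i ∈ ({a, b, c, d} : Finset (Fin n)), f i ^ 2 ≤ ∑ i : Fin n, f i ^ 2 :=
    Finset.sum_le_sum_of_subset_of_nonneg (Finset.subset_univ _)
      (fun i _ _ => sq_nonneg _)
  rw [Finset.sum_insert (by simp [hab, hac, had]),
    Finset.sum_insert (by simp [hbc, hbd]), Finset.sum_insert (by simp [hcd]),
    Finset.sum_singleton, hsum] at h
  linarith

theorem index_set_structure (n : ℕ) (hn : 1 ≤ n) (lam : Fin n → ℝ)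
    (hmono : ∀ i j : Fin n, i ≤ j → lam j ≤ lam i)
    (hnorm : ∑ i : Fin n, (lam i) ^ 2 = 1) :
    (∀ i j : Fin n, 2 / Real.sqrt 3 < lam i - lam j → i = ⟨0, by omega⟩) ∨
    (∀ i j : Fin n, 2 / Real.sqrt 3 < lam i - lam j → j = ⟨n - 1, by omega⟩) := by
  by_contra h
  push_neg at h
  obtain ⟨⟨i, j, hij, hi0⟩, ⟨i', j', hij', hj'⟩⟩ := h
  set c : ℝ := 2 / Real.sqrt 3 with hcdef
  have hs3 : (0:ℝ) < Real.sqrt 3 := Real.sqrt_pos.mpr (by norm_num)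
  have hc : 0 < c := by positivity
  have hc2 : c ^ 2 = 4 / 3 := by
    rw [hcdef, div_pow, Real.sq_sqrt (by norm_num : (0:ℝ) ≤ 3)]
    norm_num
  -- basic index facts
  have hijlt : (i : ℕ) < (j : ℕ) := by
    by_contra hle
    push_neg at hle
    have := hmono j i (by exact Fin.mk_le_mk.mpr hle)
    linarith
  have hij'lt : (i' : ℕ) < (j' : ℕ) := by
    by_contra hle
    push_neg at hle
    have := hmono j' i' (by exact Fin.mk_le_mk.mpr hle)
    linarith
  have hi1 : 1 ≤ (i : ℕ) := by
    rcases Nat.eq_zero_or_pos (i : ℕ) with h0 | h0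
    · exact absurd (Fin.ext h0) hi0
    · exact h0
  have hj'le : (j' : ℕ) ≤ n - 2 := by
    have h1 := j'.isLt
    have h2 : (j' : ℕ) ≠ n - 1 := fun he => hj' (Fin.ext (by simpa using he))
    omega
  have hn3 : 3 ≤ n := by
    have h1 := j.isLt
    have h2 := hij'lt
    have h3 := hj'le
    omega
  set i0 : Fin n := ⟨0, by omega⟩
  set i1 : Fin n := ⟨1, by omega⟩
  set i2 : Fin n := ⟨n - 2, by omega⟩
  set i3 : Fin n := ⟨n - 1, by omega⟩
  have hAB : lam i1 ≤ lam i0 := hmono i0 i1 (Fin.mk_le_mk.mpr (by omega))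
  have hYZ : lam i3 ≤ lam i2 := hmono i2 i3 (Fin.mk_le_mk.mpr (by omega))
  have hBi : lam i ≤ lam i1 := hmono i1 i (Fin.mk_le_mk.mpr (by omega))
  have hjZ : lam i3 ≤ lam j := hmono j i3 (Fin.mk_le_mk.mpr (by
    have := j.isLt; omega))
  have hAi' : lam i' ≤ lam i0 := hmono i0 i' (Fin.mk_le_mk.mpr (by omega))
  have hj'Y : lam i2 ≤ lam j' := hmono j' i2 (Fin.mk_le_mk.mpr hj'le)
  have hBZ : c < lam i1 - lam i3 := by linarith
  have hAY : c < lam i0 - lam i2 := by linarith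
  rcases Nat.lt_or_ge n 4 with hn4 | hn4
  · -- n = 3, i2 = i1
    have he : i2 = i1 := Fin.ext (by simp [i1, i2]; omega)
    rw [he] at hAY hYZ
    have hsum : lam i0 ^ 2 + lam i1 ^ 2 + lam i3 ^ 2 ≤ 1 :=
      sum_sq_ge3 lam i0 i1 i3
        (Fin.ne_of_val_ne (by simp only [i0, i1]; omega))
        (Fin.ne_of_val_ne (by simp only [i0, i3]; omega))
        (Fin.ne_of_val_ne (by simp only [i1, i3]; omega))
        hnorm
    nlinarith [sq_nonneg (lam i0 + lam i1 + lam i3), sq_nonneg (lam i0 + lam i3),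
      mul_pos (sub_pos.mpr hAY) (sub_pos.mpr hBZ), hc.le,
      mul_nonneg hc.le (sub_pos.mpr hAY).le, mul_nonneg hc.le (sub_pos.mpr hBZ).le]
  · -- n ≥ 4, all four indices distinct
    have hsum : lam i0 ^ 2 + lam i1 ^ 2 + lam i2 ^ 2 + lam i3 ^ 2 ≤ 1 :=
      sum_sq_ge4 lam i0 i1 i2 i3
        (Fin.ne_of_val_ne (by simp only [i0, i1]; omega))
        (Fin.ne_of_val_ne (by simp only [i0, i2]; omega))
        (Fin.ne_of_val_ne (by simp only [i0, i3]; omega))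
        (Fin.ne_of_val_ne (by simp only [i1, i2]; omega))
        (Fin.ne_of_val_ne (by simp only [i1, i3]; omega))
        (Fin.ne_of_val_ne (by simp only [i2, i3]; omega))
        hnorm
    nlinarith [sq_nonneg (lam i0 + lam i2), sq_nonneg (lam i1 + lam i3), hc.le]
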